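/- For each integer k ≥ 0 let h_k(z) = Σ_{m≥0} c(3m+k, m) z^m ∈ ℚ[[z]], and set h_k = 0 for k < 0. Then for every k ≥ 0, h_k'(z) = z·h_k'(z) + (k+1)·h_k(z) + 2·h_{k-3}'(z), where ' denotes the formal derivative. -/

import Mathlib

/-- Steps of a Motzkin path: up, horizontal, down. -/
inductive Step : Type
  | U | H | D
  deriving DecidableEq

/-- A list of steps is a Motzkin path if every prefix has at least as many
up steps as down steps, and the total numbers of up and down steps agree. -/
def IsMotzkin (l : List Step) : Prop :=
  (∀ k : ℕ, (l.take k).count Step.D ≤ (l.take k).count Step.U) ∧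
    l.count Step.U = l.count Step.D

/-- The number of plateaus (occurrences of consecutive steps U, H, D) in a path. -/
def plateauCount (l : List Step) : ℕ :=
  ((Finset.range l.length).filter
    (fun i => (l.drop i).take 3 = [Step.U, Step.H, Step.D])).card

/-- `c n p` is the number of Motzkin paths of length `n` with exactly `p`
plateaus; it is `0` when `n < 0` or `p < 0`. -/
noncomputable def c (n p : ℤ) : ℕ :=
  if 0 ≤ n ∧ 0 ≤ p then
    Nat.card {l : List Step // l.length = n.toNat ∧ IsMotzkin l ∧ plateauCount l = p.toNat}
  else 0

namespace MZ
open Step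

/-- insertion of a UHD block at position `g` -/
def ins (g : ℕ) (l : List Step) : List Step := l.take g ++ [U,H,D] ++ l.drop g

/-- deletion of three letters at position `t` -/
def del (t : ℕ) (l : List Step) : List Step := l.take t ++ l.drop (t+3)

def isPlat (l : List Step) (i : ℕ) : Prop :=
  l[i]? = some U ∧ l[i+1]? = some H ∧ l[i+2]? = some D

def Pl (l : List Step) : Finset ℕ :=
  (Finset.range l.length).filter (fun i => (l.drop i).take 3 = [U, H, D])

lemma plateauCount_eq (l : List Step) : plateauCount l = (Pl l).card := rfl

lemma take3_eq_iff (x : List Step) :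
    x.take 3 = [U,H,D] ↔ (x[0]? = some U ∧ x[1]? = some H ∧ x[2]? = some D) := by
  rcases x with _|⟨a,_|⟨b,_|⟨c,t⟩⟩⟩ <;> simp [List.take]

lemma isPlat_iff (l : List Step) (i : ℕ) :
    (l.drop i).take 3 = [U,H,D] ↔ isPlat l i := by
  rw [take3_eq_iff, isPlat]
  simp [List.getElem?_drop]

lemma mem_Pl (l : List Step) (i : ℕ) : i ∈ Pl l ↔ isPlat l i := by
  rw [Pl, Finset.mem_filter, Finset.mem_range, isPlat_iff]
  constructor
  · tauto
  · intro h
    exact ⟨lt_of_le_of_lt (Nat.le_add_right i 2) (List.getElem?_eq_some_iff.mp h.2.2).1, h⟩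

lemma isPlat_lt {l : List Step} {i : ℕ} (h : isPlat l i) : i + 2 < l.length :=
  (List.getElem?_eq_some_iff.mp h.2.2).1

lemma length_ins {g : ℕ} {l : List Step} (hg : g ≤ l.length) :
    (ins g l).length = l.length + 3 := by
  simp [ins]; omega

lemma getElem?_ins {g : ℕ} {l : List Step} (hg : g ≤ l.length) (i : ℕ) :
    (ins g l)[i]? = if i < g then l[i]? else if i = g then some U
      else if i = g+1 then some H else if i = g+2 then some D else l[i-3]? := by
  rw [ins, List.append_assoc, List.getElem?_append]
  rw [List.length_take, min_eq_left hg]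
  split_ifs with h1 h2 h3 h4
  · rw [List.getElem?_take, if_pos h1]
  · subst h2; simp
  · subst h3; simp
  · subst h4; simp
  · rw [List.getElem?_append_right (by simp; omega), List.getElem?_drop]
    congr 1; simp; omega

end MZ
namespace MZ
open Step

lemma isPlat_ins {g : ℕ} {l : List Step} (hg : g ≤ l.length) (i : ℕ) :
    isPlat (ins g l) i ↔ i = g ∨ (isPlat l i ∧ i + 3 ≤ g) ∨ (g + 3 ≤ i ∧ isPlat l (i-3)) := by
  unfold isPlat
  rw [getElem?_ins hg, getElem?_ins hg, getElem?_ins hg]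
  rcases Nat.lt_trichotomy (i+3) g with h | h | h
  · have h1 : i < g := by omega
    have h2 : i + 1 < g := by omega
    have h3 : i + 2 < g := by omega
    simp only [if_pos h1, if_pos h2, if_pos h3]
    constructor
    · intro hc; exact Or.inr (Or.inl ⟨hc, by omega⟩)
    · rintro (rfl | ⟨hp, _⟩ | ⟨hgi, _⟩)
      · omega
      · exact hp
      · omega
  · -- i + 3 = g : positions i, i+1, i+2 all < g
    have h1 : i < g := by omega
    have h2 : i + 1 < g := by omega
    have h3 : i + 2 < g := by omega
    simp only [if_pos h1, if_pos h2, if_pos h3]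
    constructor
    · intro hc; exact Or.inr (Or.inl ⟨hc, by omega⟩)
    · rintro (rfl | ⟨hp, _⟩ | ⟨hgi, _⟩)
      · omega
      · exact hp
      · omega
  · -- g < i + 3
    rcases Nat.lt_trichotomy i g with hi | hi | hi
    · -- i < g ≤ i + 2 : crossing, always false
      constructor
      · rintro ⟨c1, c2, c3⟩
        exfalso
        rcases Nat.lt_or_ge (i+1) g with h4 | h4
        · -- i + 2 = g : third letter is U, need D
          have : i + 2 = g := by omega
          rw [if_neg (by omega), if_pos this] at c3
          exact Step.noConfusion (Option.some.inj c3)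
        · -- i + 1 = g : second letter is U, need H
          have : i + 1 = g := by omega
          rw [if_neg (by omega), if_pos this] at c2
          exact Step.noConfusion (Option.some.inj c2)
      · rintro (rfl | ⟨hp, h'⟩ | ⟨hgi, _⟩) <;> omega
    · -- i = g : the inserted plateau
      subst hi
      rw [if_neg (by omega), if_pos rfl, if_neg (by omega), if_neg (by omega),
        if_pos rfl, if_neg (by omega), if_neg (by omega), if_neg (by omega), if_pos rfl]
      simp
    · -- i > g
      rcases Nat.lt_or_ge i (g+3) with hi3 | hi3
      · -- i = g+1 or g+2 : crossing, false
        constructor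
        · rintro ⟨c1, c2, c3⟩
          exfalso
          rcases Nat.lt_or_ge i (g+2) with h4 | h4
          · -- i = g + 1 : first letter is H
            have : i = g + 1 := by omega
            rw [if_neg (by omega), if_neg (by omega), if_pos this] at c1
            exact Step.noConfusion (Option.some.inj c1)
          · -- i = g + 2 : first letter is D
            have : i = g + 2 := by omega
            rw [if_neg (by omega), if_neg (by omega), if_neg (by omega), if_pos this] at c1
            exact Step.noConfusion (Option.some.inj c1)
        · rintro (rfl | ⟨hp, h'⟩ | ⟨hgi, _⟩) <;> omega
      · -- i ≥ g + 3 : shifted old plateaus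
        rw [if_neg (by omega), if_neg (by omega), if_neg (by omega), if_neg (by omega),
          if_neg (by omega), if_neg (by omega), if_neg (by omega), if_neg (by omega),
          if_neg (by omega), if_neg (by omega), if_neg (by omega), if_neg (by omega)]
        have e1 : i + 1 - 3 = i - 3 + 1 := by omega
        have e2 : i + 2 - 3 = i - 3 + 2 := by omega
        rw [e1, e2]
        constructor
        · intro hc; exact Or.inr (Or.inr ⟨hi3, hc⟩)
        · rintro (rfl | ⟨hp, h'⟩ | ⟨_, hp⟩)
          · omega
          · omega
          · exact hp

/-- plateaus are 3-separated -/
lemma plat_sep {l : List Step} {i j : ℕ} (hi : isPlat l i) (hj : isPlat l j) (hij : i < j) :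
    i + 3 ≤ j := by
  by_contra hc
  rcases Nat.lt_or_ge j (i+2) with h | h
  · -- j = i+1
    have : j = i + 1 := by omega
    subst this
    exact Step.noConfusion (Option.some.inj (hi.2.1.symm.trans hj.1))
  · -- j = i+2
    have : j = i + 2 := by omega
    subst this
    exact Step.noConfusion (Option.some.inj (hi.2.2.symm.trans hj.1))

end MZ
namespace MZ
open Step

/-- `g` is interior to a plateau of `l` -/
def Intr (l : List Step) (g : ℕ) : Prop := ∃ j ∈ Pl l, j + 1 = g ∨ j + 2 = g

instance (l : List Step) (g : ℕ) : Decidable (Intr l g) := by unfold Intr; infer_instance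

lemma Pl_ins {g : ℕ} {l : List Step} (hg : g ≤ l.length) :
    Pl (ins g l) = insert g (((Pl l).filter (fun j => j + 3 ≤ g)) ∪
      ((Pl l).filter (fun j => g ≤ j)).image (· + 3)) := by
  ext i
  simp only [mem_Pl, isPlat_ins hg, Finset.mem_insert, Finset.mem_union, Finset.mem_filter,
    Finset.mem_image, mem_Pl]
  constructor
  · rintro (rfl | ⟨hp, h⟩ | ⟨h, hp⟩)
    · exact Or.inl rfl
    · exact Or.inr (Or.inl ⟨hp, h⟩)
    · exact Or.inr (Or.inr ⟨i - 3, ⟨hp, by omega⟩, by omega⟩)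
  · rintro (rfl | ⟨hp, h⟩ | ⟨j, ⟨hp, h⟩, rfl⟩)
    · exact Or.inl rfl
    · exact Or.inr (Or.inl ⟨hp, h⟩)
    · refine Or.inr (Or.inr ⟨by omega, by simpa using hp⟩)

lemma card_Pl_ins {g : ℕ} {l : List Step} (hg : g ≤ l.length) :
    (Pl (ins g l)).card = (Pl l).card + 1 - (if Intr l g then 1 else 0) := by
  rw [Pl_ins hg]
  have hdisj : Disjoint ((Pl l).filter (fun j => j + 3 ≤ g))
      (((Pl l).filter (fun j => g ≤ j)).image (· + 3)) := by
    rw [Finset.disjoint_left]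
    intro a ha hb
    simp only [Finset.mem_filter, Finset.mem_image] at ha hb
    omega
  have hnotmem : g ∉ ((Pl l).filter (fun j => j + 3 ≤ g)) ∪
      ((Pl l).filter (fun j => g ≤ j)).image (· + 3) := by
    simp only [Finset.mem_union, Finset.mem_filter, Finset.mem_image, not_or]
    constructor
    · rintro ⟨_, h⟩; omega
    · rintro ⟨j, ⟨_, h⟩, h2⟩; omega
  rw [Finset.card_insert_of_notMem hnotmem, Finset.card_union_of_disjoint hdisj,
    Finset.card_image_of_injective _ (fun a b h => by omega)]
  -- partition Pl l into three parts
  have key : (Pl l).card = ((Pl l).filter (fun j => j + 3 ≤ g)).card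
      + ((Pl l).filter (fun j => g ≤ j)).card
      + ((Pl l).filter (fun j => j + 1 = g ∨ j + 2 = g)).card := by
    rw [← Finset.card_union_of_disjoint, ← Finset.card_union_of_disjoint]
    · congr 1
      ext j
      simp only [Finset.mem_union, Finset.mem_filter]
      constructor
      · intro hj
        rcases Nat.lt_or_ge j g with h | h
        · rcases Nat.lt_or_ge (j+3) (g+1) with h2 | h2
          · exact Or.inl (Or.inl ⟨hj, by omega⟩)
          · exact Or.inr ⟨hj, by omega⟩
        · exact Or.inl (Or.inr ⟨hj, h⟩)
      · rintro ((⟨hj, _⟩ | ⟨hj, _⟩) | ⟨hj, _⟩) <;> exact hj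
    · rw [Finset.disjoint_left]
      intro a ha hb
      simp only [Finset.mem_union, Finset.mem_filter] at ha hb
      rcases ha with ⟨_, h⟩ | ⟨_, h⟩ <;> omega
    · rw [Finset.disjoint_left]
      intro a ha hb
      simp only [Finset.mem_filter] at ha hb
      omega
  have hmid : ((Pl l).filter (fun j => j + 1 = g ∨ j + 2 = g)).card
      = (if Intr l g then 1 else 0) := by
    split_ifs with h
    · obtain ⟨j, hj, hjg⟩ := h
      rw [Finset.card_eq_one]
      refine ⟨j, ?_⟩
      ext a
      simp only [Finset.mem_filter, Finset.mem_singleton]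
      constructor
      · rintro ⟨ha, hag⟩
        by_contra hne
        rcases Nat.lt_or_ge a j with hlt | hge
        · have := plat_sep ((mem_Pl l a).mp ha) ((mem_Pl l j).mp hj) hlt; omega
        · have hlt : j < a := by omega
          have := plat_sep ((mem_Pl l j).mp hj) ((mem_Pl l a).mp ha) hlt; omega
      · rintro rfl; exact ⟨hj, hjg⟩
    · rw [Finset.card_eq_zero, Finset.filter_eq_empty_iff]
      intro j hj hc
      exact h ⟨j, hj, hc⟩
  omega

/-- the set of interior positions has cardinality `2 * #plateaus` -/
lemma card_intr (l : List Step) :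
    ((Finset.range (l.length + 1)).filter (fun g => Intr l g)).card = 2 * (Pl l).card := by
  have : (Finset.range (l.length + 1)).filter (fun g => Intr l g)
      = (Pl l).biUnion (fun j => {j+1, j+2}) := by
    ext g
    simp only [Finset.mem_filter, Finset.mem_range, Finset.mem_biUnion, Finset.mem_insert,
      Finset.mem_singleton]
    simp only [Intr]
    constructor
    · rintro ⟨_, j, hj, hc⟩; exact ⟨j, hj, by omega⟩
    · rintro ⟨j, hj, hc⟩
      have := isPlat_lt ((mem_Pl l j).mp hj)
      exact ⟨by omega, j, hj, by omega⟩
  rw [this, Finset.card_biUnion]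
  · simp [mul_comm, Finset.card_insert_of_notMem, Finset.sum_const]
  · intro x hx y hy hxy
    have hsep : x < y → x + 3 ≤ y := plat_sep ((mem_Pl l x).mp hx) ((mem_Pl l y).mp hy)
    have hsep' : y < x → y + 3 ≤ x := plat_sep ((mem_Pl l y).mp hy) ((mem_Pl l x).mp hx)
    rw [Function.onFun, Finset.disjoint_left]
    intro a ha hb
    simp only [Finset.mem_insert, Finset.mem_singleton] at ha hb
    rcases Nat.lt_trichotomy x y with h | h | h
    · have := hsep h; omega
    · exact hxy h
    · have := hsep' h; omega

lemma card_not_intr {l : List Step} :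
    ((Finset.range (l.length + 1)).filter (fun g => ¬ Intr l g)).card
      = l.length + 1 - 2 * (Pl l).card := by
  have := card_intr l
  have h2 := Finset.card_filter_add_card_filter_not
    (s := Finset.range (l.length + 1)) (p := fun g => Intr l g)
  rw [Finset.card_range] at h2
  omega

/-- plateau count bound: 3 * #plateaus ≤ length -/
lemma three_mul_card_Pl_le (l : List Step) : 3 * (Pl l).card ≤ l.length := by
  have : ((Pl l) ×ˢ (Finset.range 3)).card ≤ (Finset.range l.length).card := by
    apply Finset.card_le_card_of_injOn (fun p => p.1 + p.2)
    · rintro ⟨j, r⟩ hp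
      simp only [Finset.mem_coe, Finset.mem_product, Finset.mem_range, mem_Pl] at hp
      have := isPlat_lt hp.1
      simp only [Finset.mem_coe, Finset.mem_range]
      omega
    · rintro ⟨j, r⟩ hj ⟨j', r'⟩ hj' hee
      simp only [Finset.mem_product, Finset.mem_range, mem_Pl, Finset.mem_coe] at hj hj'
      simp only at hee
      rcases Nat.lt_trichotomy j j' with h | h | h
      · have := plat_sep hj.1 hj'.1 h; omega
      · simp only [Prod.mk.injEq]; omega
      · have := plat_sep hj'.1 hj.1 h; omega
  simpa [Finset.card_product, mul_comm] using this

end MZ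
namespace MZ
open Step

lemma take_append_left' {A B : List Step} {t : ℕ} (h : A.length = t) :
    (A ++ B).take t = A := by
  subst h; simp

lemma drop_append_left' {A B : List Step} {t : ℕ} (h : A.length = t) :
    (A ++ B).drop t = B := by
  subst h; exact List.drop_left

lemma del_ins {g : ℕ} {l : List Step} (hg : g ≤ l.length) : del g (ins g l) = l := by
  unfold del ins
  have h1 : (l.take g).length = g := by simp [hg]
  rw [List.append_assoc, take_append_left' h1, ← List.append_assoc,
    drop_append_left' (by simp [h1]), List.take_append_drop]

lemma ins_del {t : ℕ} {l : List Step} (ht : isPlat l t) : ins t (del t l) = l := by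
  have hlen : t + 2 < l.length := isPlat_lt ht
  unfold ins del
  have h1 : (l.take t).length = t := by simp; omega
  rw [take_append_left' h1, drop_append_left' h1]
  have h3 : (l.drop t).take 3 = [U,H,D] := (isPlat_iff l t).mpr ht
  have hsplit : l.drop t = [U,H,D] ++ l.drop (t+3) := by
    conv_lhs => rw [← List.take_append_drop 3 (l.drop t)]
    rw [h3, List.drop_drop]
  rw [List.append_assoc, ← hsplit, List.take_append_drop]

lemma length_del {t : ℕ} {l : List Step} (ht : t + 3 ≤ l.length) :
    (del t l).length = l.length - 3 := by
  simp [del]; omega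

lemma count_take_ins_le {g : ℕ} {l : List Step} (hg : g ≤ l.length) (s : Step) {kk : ℕ}
    (h : kk ≤ g) : ((ins g l).take kk).count s = (l.take kk).count s := by
  have h1 : (l.take g).length = g := by simp [hg]
  unfold ins
  rw [List.append_assoc, List.take_append, h1, Nat.sub_eq_zero_of_le h]
  simp [List.take_take, min_eq_left h]

lemma count_take_ins_ge {g : ℕ} {l : List Step} (hg : g ≤ l.length) (s : Step) {kk : ℕ}
    (h : g + 3 ≤ kk) :
    ((ins g l).take kk).count s = (l.take (kk-3)).count s + ([U,H,D] : List Step).count s := by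
  have h1 : (l.take g).length = g := by simp [hg]
  unfold ins
  rw [List.append_assoc, List.take_append, h1,
    List.take_of_length_le (le_of_eq_of_le h1 (by omega)), List.take_append,
    List.take_of_length_le (l := [U,H,D]) (by simp; omega)]
  have hsp : ∀ m, g ≤ m →
      (l.take m).count s = (l.take g).count s + ((l.drop g).take (m - g)).count s := by
    intro m hm
    conv_lhs => rw [(by omega : m = g + (m - g)), List.take_add]
    rw [List.count_append]
  rw [hsp (kk - 3) (by omega)]
  simp only [List.count_append]
  have e3 : kk - g - ([U,H,D] : List Step).length = kk - 3 - g := by simp; omega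
  rw [e3]
  ring

lemma count_take_ins_mid {g : ℕ} {l : List Step} (hg : g ≤ l.length) (s : Step) {kk : ℕ}
    (h1' : g < kk) (h2' : kk < g + 3) :
    ((ins g l).take kk).count s
      = (l.take g).count s + (([U,H,D] : List Step).take (kk-g)).count s := by
  have h1 : (l.take g).length = g := by simp [hg]
  unfold ins
  rw [List.append_assoc, List.take_append, h1,
    List.take_of_length_le (show (l.take g).length ≤ kk by rw [h1]; omega),
    List.take_append,
    (show kk - g - ([U,H,D] : List Step).length = 0 from by simp; omega),
    List.take_zero, List.append_nil, List.count_append]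

lemma isMotzkin_ins_iff {g : ℕ} {l : List Step} (hg : g ≤ l.length) :
    IsMotzkin (ins g l) ↔ IsMotzkin l := by
  have cU : ([U,H,D] : List Step).count U = 1 := by decide
  have cD : ([U,H,D] : List Step).count D = 1 := by decide
  have hcount : ∀ s : Step, (ins g l).count s = l.count s + ([U,H,D] : List Step).count s := by
    intro s
    unfold ins
    rw [List.count_append, List.count_append]
    conv_rhs => rw [← List.take_append_drop g l, List.count_append]
    ring
  constructor
  · rintro ⟨hpre, htot⟩
    constructor
    · intro kk
      rcases le_or_gt kk g with h | h
      · have := hpre kk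
        rw [count_take_ins_le hg U h, count_take_ins_le hg D h] at this
        exact this
      · have := hpre (kk + 3)
        rw [count_take_ins_ge hg U (by omega), count_take_ins_ge hg D (by omega),
          cU, cD] at this
        simp only [Nat.add_sub_cancel] at this
        omega
    · have h1 := hcount U
      have h2 := hcount D
      rw [htot] at h1
      rw [cU] at h1
      rw [cD] at h2
      omega
  · rintro ⟨hpre, htot⟩
    constructor
    · intro kk
      rcases le_or_gt kk g with h | h
      · rw [count_take_ins_le hg U h, count_take_ins_le hg D h]
        exact hpre kk
      · rcases le_or_gt (g+3) kk with h2 | h2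
        · rw [count_take_ins_ge hg U h2, count_take_ins_ge hg D h2, cU, cD]
          have := hpre (kk - 3)
          omega
        · rw [count_take_ins_mid hg U h h2, count_take_ins_mid hg D h h2]
          have := hpre g
          have hv : kk - g = 1 ∨ kk - g = 2 := by omega
          rcases hv with hv | hv <;> rw [hv] <;>
            simp only [(by decide : (([U,H,D] : List Step).take 1).count U = 1),
              (by decide : (([U,H,D] : List Step).take 1).count D = 0),
              (by decide : (([U,H,D] : List Step).take 2).count U = 1),
              (by decide : (([U,H,D] : List Step).take 2).count D = 0)] <;> omega
    · rw [hcount U, hcount D, htot, cU, cD]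

end MZ
instance : Fintype Step :=
  ⟨{Step.U, Step.H, Step.D}, by intro x; cases x <;> decide⟩

namespace MZ
open Step

/-- the natural-number count of Motzkin paths -/
def S (n p : ℕ) : Type := {l : List Step // l.length = n ∧ IsMotzkin l ∧ plateauCount l = p}

noncomputable def cc (n p : ℕ) : ℕ := Nat.card (S n p)

instance finS (n p : ℕ) : Finite (S n p) := by
  have : Finite {l : List Step // l.length = n} := (List.finite_length_eq Step n).to_subtype
  refine Finite.of_injective
    (fun x : S n p => (⟨x.1, x.2.1⟩ : {l : List Step // l.length = n})) ?_
  intro a b hab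
  obtain ⟨la, ha⟩ := a
  obtain ⟨lb, hb⟩ := b
  simp only [Subtype.mk.injEq] at hab ⊢
  subst hab; rfl

lemma cc_eq_zero {n p : ℕ} (h : n < 3 * p) : cc n p = 0 := by
  rw [cc, Nat.card_eq_zero]
  left
  constructor
  rintro ⟨l, hlen, _, hp⟩
  have := three_mul_card_Pl_le l
  rw [← plateauCount_eq, hp, hlen] at this
  omega

lemma card_sigma_const {α : Type} (F : α → Finset ℕ) (r : ℕ) (hF : ∀ a, (F a).card = r) :
    Nat.card (Σ a : α, {t // t ∈ F a}) = Nat.card α * r := by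
  have e : (Σ a : α, {t // t ∈ F a}) ≃ α × Fin r :=
    (Equiv.sigmaCongrRight (fun a => (F a).equivFin.trans (finCongr (hF a)))).trans
      (Equiv.sigmaEquivProd α (Fin r))
  rw [Nat.card_congr e, Nat.card_prod, Nat.card_eq_fintype_card (α := Fin r), Fintype.card_fin]

lemma sig_ext {n p : ℕ} {F : List Step → Finset ℕ}
    (x y : Σ l : S n p, {t // t ∈ F l.1}) (h1 : x.1.1 = y.1.1) (h2 : x.2.1 = y.2.1) : x = y := by
  obtain ⟨⟨lx, px⟩, ⟨tx, qx⟩⟩ := x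
  obtain ⟨⟨ly, py⟩, ⟨ty, qy⟩⟩ := y
  simp only at h1 h2
  subst h1
  subst h2
  rfl

end MZ
namespace MZ
open Step

def NI (l : List Step) : Finset ℕ :=
  (Finset.range (l.length + 1)).filter (fun g => ¬ Intr l g)
def II (l : List Step) : Finset ℕ :=
  (Finset.range (l.length + 1)).filter (fun g => Intr l g)

lemma mem_NI_le {l : List Step} {g : ℕ} (h : g ∈ NI l) : g ≤ l.length ∧ ¬ Intr l g := by
  simp only [NI, Finset.mem_filter, Finset.mem_range] at h
  exact ⟨by omega, h.2⟩

lemma mem_II_le {l : List Step} {g : ℕ} (h : g ∈ II l) : g ≤ l.length ∧ Intr l g := by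
  simp only [II, Finset.mem_filter, Finset.mem_range] at h
  exact ⟨by omega, h.2⟩

section Bij

variable (n m : ℕ)

abbrev TA := Σ l : S (n+3) (m+1), {t // t ∈ Pl l.1}
abbrev TB := Σ l : S n m, {g // g ∈ NI l.1}
abbrev TC := Σ l : S n (m+1), {g // g ∈ II l.1}

lemma ins_facts {l : List Step} {g : ℕ} (hlen : l.length = n) (hmz : IsMotzkin l)
    (hg : g ≤ l.length) :
    (ins g l).length = n + 3 ∧ IsMotzkin (ins g l) ∧ g ∈ Pl (ins g l) := by
  refine ⟨by rw [length_ins hg, hlen], (isMotzkin_ins_iff hg).mpr hmz, ?_⟩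
  rw [mem_Pl, isPlat_ins hg]
  exact Or.inl rfl

def fwd : TB n m ⊕ TC n m → TA n m
  | Sum.inl ⟨⟨l, hlen, hmz, hp⟩, ⟨g, hg⟩⟩ =>
      have hg' : g ≤ l.length ∧ ¬ Intr l g := mem_NI_le hg
      have hf := ins_facts n hlen hmz hg'.1
      ⟨⟨ins g l, hf.1, hf.2.1, by
        rw [plateauCount_eq, card_Pl_ins hg'.1, if_neg hg'.2, ← plateauCount_eq, hp]
        omega⟩,
        ⟨g, hf.2.2⟩⟩
  | Sum.inr ⟨⟨l, hlen, hmz, hp⟩, ⟨g, hg⟩⟩ =>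
      have hg' : g ≤ l.length ∧ Intr l g := mem_II_le hg
      have hf := ins_facts n hlen hmz hg'.1
      ⟨⟨ins g l, hf.1, hf.2.1, by
        rw [plateauCount_eq, card_Pl_ins hg'.1, if_pos hg'.2, ← plateauCount_eq, hp]
        omega⟩,
        ⟨g, hf.2.2⟩⟩

lemma fwd_fst : ∀ x : TB n m ⊕ TC n m,
    (fwd n m x).1.1 = ins (Sum.elim (fun y => y.2.1) (fun y => y.2.1) x)
      (Sum.elim (fun y => y.1.1) (fun y => y.1.1) x)
  | Sum.inl ⟨⟨l, hlen, hmz, hp⟩, ⟨g, hg⟩⟩ => rfl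
  | Sum.inr ⟨⟨l, hlen, hmz, hp⟩, ⟨g, hg⟩⟩ => rfl

lemma fwd_snd : ∀ x : TB n m ⊕ TC n m,
    (fwd n m x).2.1 = Sum.elim (fun y => y.2.1) (fun y => y.2.1) x
  | Sum.inl ⟨⟨l, hlen, hmz, hp⟩, ⟨g, hg⟩⟩ => rfl
  | Sum.inr ⟨⟨l, hlen, hmz, hp⟩, ⟨g, hg⟩⟩ => rfl

lemma fwd_bij : Function.Bijective (fwd n m) := by
  constructor
  · intro x y hxy
    have h1 := (fwd_fst n m x).symm.trans ((congrArg (fun z => z.1.1) hxy).trans (fwd_fst n m y))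
    have h2 := (fwd_snd n m x).symm.trans ((congrArg (fun z => z.2.1) hxy).trans (fwd_snd n m y))
    rcases x with ⟨⟨lx, hlenx, hmzx, hpx⟩, ⟨gx, hgx⟩⟩ | ⟨⟨lx, hlenx, hmzx, hpx⟩, ⟨gx, hgx⟩⟩ <;>
      rcases y with ⟨⟨ly, hleny, hmzy, hpy⟩, ⟨gy, hgy⟩⟩ | ⟨⟨ly, hleny, hmzy, hpy⟩, ⟨gy, hgy⟩⟩ <;>
      simp only [Sum.elim_inl, Sum.elim_inr] at h1 h2 <;> subst h2
    · have hll : lx = ly := by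
        have := congrArg (del gx) h1
        rwa [del_ins (mem_NI_le hgx).1, del_ins (mem_NI_le hgy).1] at this
      exact congrArg Sum.inl (sig_ext _ _ hll rfl)
    · exfalso
      have hll : lx = ly := by
        have := congrArg (del gx) h1
        rwa [del_ins (mem_NI_le hgx).1, del_ins (mem_II_le hgy).1] at this
      subst hll; rw [hpx] at hpy; omega
    · exfalso
      have hll : lx = ly := by
        have := congrArg (del gx) h1
        rwa [del_ins (mem_II_le hgx).1, del_ins (mem_NI_le hgy).1] at this
      subst hll; rw [hpx] at hpy; omega
    · have hll : lx = ly := by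
        have := congrArg (del gx) h1
        rwa [del_ins (mem_II_le hgx).1, del_ins (mem_II_le hgy).1] at this
      exact congrArg Sum.inr (sig_ext _ _ hll rfl)
  · rintro ⟨⟨l', hlen', hmz', hp'⟩, ⟨t, ht⟩⟩
    have hplat : isPlat l' t := (mem_Pl _ _).mp ht
    have h3 : t + 2 < l'.length := isPlat_lt hplat
    set l := del t l' with hldef
    have hins : ins t l = l' := ins_del hplat
    have hlenl : l.length = n := by rw [hldef, length_del (by omega)]; omega
    have hg : t ≤ l.length := by omega
    have hmz : IsMotzkin l := by
      rw [← isMotzkin_ins_iff hg, hins]; exact hmz'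
    have hcard : (Pl l').card = (Pl l).card + 1 - (if Intr l t then 1 else 0) := by
      rw [← hins]; exact card_Pl_ins hg
    have hpl' : (Pl l').card = m + 1 := by rw [← plateauCount_eq]; exact hp'
    have htn : t ∈ Finset.range (l.length + 1) := by
      rw [Finset.mem_range]; omega
    by_cases hint : Intr l t
    · have hplm : plateauCount l = m + 1 := by
        rw [plateauCount_eq]; rw [if_pos hint] at hcard; omega
      refine ⟨Sum.inr ⟨⟨l, hlenl, hmz, hplm⟩, ⟨t, ?_⟩⟩, ?_⟩
      · simp only [II, Finset.mem_filter]
        exact ⟨htn, hint⟩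
      · apply sig_ext
        · rw [fwd_fst]; simpa using hins
        · rw [fwd_snd]; simp
    · have hplm : plateauCount l = m := by
        rw [plateauCount_eq]; rw [if_neg hint] at hcard; omega
      refine ⟨Sum.inl ⟨⟨l, hlenl, hmz, hplm⟩, ⟨t, ?_⟩⟩, ?_⟩
      · simp only [NI, Finset.mem_filter]
        exact ⟨htn, hint⟩
      · apply sig_ext
        · rw [fwd_fst]; simpa using hins
        · rw [fwd_snd]; simp

end Bij

/-- the key counting identity -/
lemma key (n m : ℕ) :
    cc (n+3) (m+1) * (m+1) = cc n m * (n + 1 - 2*m) + cc n (m+1) * (2*(m+1)) := by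
  have hA : Nat.card (TA n m) = cc (n+3) (m+1) * (m+1) := by
    refine card_sigma_const (fun l : S (n+3) (m+1) => Pl l.1) (m+1) ?_
    intro a
    rw [← plateauCount_eq]
    exact a.2.2.2
  have hB : Nat.card (TB n m) = cc n m * (n + 1 - 2*m) := by
    refine card_sigma_const (fun l : S n m => NI l.1) (n + 1 - 2*m) ?_
    intro a
    show (NI a.1).card = n + 1 - 2*m
    simp only [NI]
    rw [card_not_intr, a.2.1, ← plateauCount_eq, a.2.2.2]
  have hC : Nat.card (TC n m) = cc n (m+1) * (2*(m+1)) := by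
    refine card_sigma_const (fun l : S n (m+1) => II l.1) (2*(m+1)) ?_
    intro a
    show (II a.1).card = 2*(m+1)
    simp only [II]
    rw [card_intr, ← plateauCount_eq, a.2.2.2]
  have hbij := Nat.card_eq_of_bijective _ (fwd_bij n m)
  rw [Nat.card_sum, hA, hB, hC] at hbij
  omega

end MZ
namespace MZ

lemma c_coe (n p : ℕ) : c (n : ℤ) (p : ℤ) = cc n p := by
  rw [c, if_pos ⟨Int.natCast_nonneg n, Int.natCast_nonneg p⟩]
  simp only [Int.toNat_natCast]
  rfl

/-- the main rational identity -/
lemma main_q (K m : ℕ) :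
    (cc (3*(m+1)+K) (m+1) : ℚ) * ((m:ℚ)+1)
      = (cc (3*m+K) m : ℚ) * m + ((K:ℚ)+1) * (cc (3*m+K) m : ℚ)
        + 2 * ((cc (3*m+K) (m+1) : ℚ) * ((m:ℚ)+1)) := by
  have h := key (3*m+K) m
  have e1 : 3*m+K+1-2*m = m+K+1 := by omega
  have e2 : 3*(m+1)+K = 3*m+K+3 := by omega
  rw [e1] at h
  rw [e2]
  have : (cc (3*m+K+3) (m+1) : ℚ) * ((m:ℚ)+1)
      = ((cc (3*m+K+3) (m+1) * (m+1) : ℕ) : ℚ) := by push_cast; ring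
  rw [this, h]
  push_cast
  ring

end MZ

open PowerSeries in
/-- `h k` is the generating function of the `k`-th diagonal `m ↦ c(3m+k, m)` of the
plateau-counting array, with `h k = 0` for `k < 0`. -/
theorem diagonal_difdif
    (h : ℤ → PowerSeries ℚ)
    (hh : ∀ k : ℤ, 0 ≤ k → h k = PowerSeries.mk fun m => (c (3 * m + k) m : ℚ))
    (hneg : ∀ k : ℤ, k < 0 → h k = 0)
    (k : ℤ) (hk : 0 ≤ k) :
    (d⁄dX ℚ) (h k)
      = X * (d⁄dX ℚ) (h k) + ((k : PowerSeries ℚ) + 1) * h k + 2 * (d⁄dX ℚ) (h (k - 3)) := by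
  obtain ⟨K, rfl⟩ : ∃ K : ℕ, k = (K : ℤ) := ⟨k.toNat, (Int.toNat_of_nonneg hk).symm⟩
  have hcoe : ∀ m p : ℕ, (c (3 * (m:ℤ) + (K:ℤ)) (p:ℤ) : ℚ) = MZ.cc (3*m+K) p := by
    intro m p
    have e : 3 * (m:ℤ) + (K:ℤ) = ((3*m+K : ℕ) : ℤ) := by push_cast; ring
    rw [e, MZ.c_coe]
  have hker : ((K : ℤ) : PowerSeries ℚ) + 1 = PowerSeries.C ((K:ℚ)+1) := by
    rw [map_add, map_natCast, map_one, Int.cast_natCast]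
  have h2C : (2 : PowerSeries ℚ) = PowerSeries.C (2:ℚ) := by
    rw [map_ofNat]
  apply PowerSeries.ext
  intro m
  rw [map_add, map_add, hh K (by positivity), hker, h2C, PowerSeries.coeff_C_mul,
    PowerSeries.coeff_C_mul, PowerSeries.coeff_derivative, PowerSeries.coeff_mk]
  -- the third term
  have hthird : PowerSeries.coeff m ((d⁄dX ℚ) (h ((K:ℤ) - 3)))
      = (MZ.cc (3*m+K) (m+1) : ℚ) * ((m:ℚ)+1) := by
    rcases le_or_gt 3 (K:ℤ) with h3 | h3
    · rw [hh ((K:ℤ)-3) (by omega), PowerSeries.coeff_derivative, PowerSeries.coeff_mk]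
      have e : 3 * ((m+1 : ℕ):ℤ) + ((K:ℤ)-3) = 3 * ((m:ℤ)+1) + (K:ℤ) - 3 := by push_cast; ring
      have e2 : 3 * ((m+1 : ℕ):ℤ) + ((K:ℤ)-3) = ((3*m+K : ℕ):ℤ) := by push_cast; omega
      rw [e2, MZ.c_coe]
      try push_cast
      try ring
    · rw [hneg ((K:ℤ)-3) (by omega), map_zero, map_zero]
      have hz : MZ.cc (3*m+K) (m+1) = 0 := by
        apply MZ.cc_eq_zero
        omega
      rw [hz]
      norm_num
  rw [hthird]
  have hXterm : PowerSeries.coeff m (X * (d⁄dX ℚ) (PowerSeries.mk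
      fun m => (c (3 * (m:ℤ) + (K:ℤ)) (m:ℤ) : ℚ)))
      = (MZ.cc (3*m+K) m : ℚ) * m := by
    rcases m with _ | m'
    · rw [PowerSeries.coeff_zero_X_mul]
      norm_num
    · rw [PowerSeries.coeff_succ_X_mul, PowerSeries.coeff_derivative, PowerSeries.coeff_mk,
        hcoe (m'+1) (m'+1)]
      push_cast
      ring
  rw [hXterm, hcoe (m+1) (m+1), PowerSeries.coeff_mk, hcoe m m]
  have := MZ.main_q K m
  push_cast at this ⊢
  linarith [this]
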